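/- arXiv:1510.03454 — 2 statements merged into one kernel-verified Lean document; each statement's English description precedes it below -/
import Mathlib

section
/- Let (B_i^j)_{i,j∈ℤ} define an OQRW on ℤ and let A ⊆ ℤ. For i ∉ A and positive semidefinite X define k̂_i(X) = ∑_{r≥1} r · b_r(X) ∈ [0,∞], where b_r(X) is the sum of tr(C X C*) over all first-passage paths from i to A of length r with path operator C; for i ∈ A set k̂_i(X) = 0. Assume hitting A is certain: h_j^A(ρ) = 1 for every j ∉ A and every density matrix ρ. Then: (1) for every i ∉ A and every density matrix ρ, k̂_i(ρ) = 1 + ∑_{j∉A} k̂_j( B_i^j ρ (B_i^j)* ) (arithmetic in [0,∞]); and (2) if (y_i)_{i∈ℤ} is any family of [0,∞]-valued functions on positive semidefinite matrices that are additive and positively homogeneous, with y_i = 0 for i ∈ A and y_i(X) = tr(X) + ∑_{j∉A} y_j( B_i^j X (B_i^j)* ) for all i ∉ A and positive semidefinite X, then y_i(ρ) ≥ k̂_i(ρ) for every i and every density matrix ρ. Thus (k̂_i) is the minimal nonnegative solution of this system. -/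
open Matrix ComplexOrder
open scoped ENNReal NNReal

/-- A first-passage path from `i` to the set `A ⊆ ℤ`: a finite sequence
i = x₀, x₁, …, x_r with r ≥ 1, x₀, …, x_{r−1} ∉ A and x_r ∈ A; `r` is its length. -/
structure FPPath (A : Set ℤ) (i : ℤ) where
  r : ℕ
  x : ℕ → ℤ
  hr : 1 ≤ r
  hx0 : x 0 = i
  hmid : ∀ m, m < r → x m ∉ A
  hlast : x r ∈ A
  htail : ∀ m, r ≤ m → x m = x r

/-- The path operator C = B_{x_{r−1}}^{x_r} ⋯ B_{x₁}^{x₂} B_{x₀}^{x₁}. -/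
noncomputable def pathOp {k : ℕ} (B : ℤ → ℤ → Matrix (Fin k) (Fin k) ℂ)
    {A : Set ℤ} {i : ℤ} (p : FPPath A i) : Matrix (Fin k) (Fin k) ℂ :=
  (List.range p.r).foldl (fun M m => B (p.x m) (p.x (m + 1)) * M) 1

-- Hitting probability h_i^A(ρ): sum of tr(C ρ C*) over all first-passage paths, 1 on A.
open Classical in
noncomputable def hitProb {k : ℕ} (B : ℤ → ℤ → Matrix (Fin k) (Fin k) ℂ)
    (A : Set ℤ) (i : ℤ) (ρ : Matrix (Fin k) (Fin k) ℂ) : ℝ :=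
  if i ∈ A then 1
  else ∑' p : FPPath A i, (Matrix.trace (pathOp B p * ρ * (pathOp B p)ᴴ)).re

-- Expected hitting time k̂_i(X) = ∑_{r≥1} r·b_r(X) ∈ [0,∞], i.e. the sum over all
-- first-passage paths of (length)·tr(C X C*); set to 0 on A.
open Classical in
noncomputable def meanHit {k : ℕ} (B : ℤ → ℤ → Matrix (Fin k) (Fin k) ℂ)
    (A : Set ℤ) (i : ℤ) (X : Matrix (Fin k) (Fin k) ℂ) : ℝ≥0∞ :=
  if i ∈ A then 0
  else ∑' p : FPPath A i,
    (p.r : ℝ≥0∞) * ENNReal.ofReal (Matrix.trace (pathOp B p * X * (pathOp B p)ᴴ)).re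

/-!
A first-passage path from `i ∉ A` either jumps straight into `A` or is a step `i → j ∉ A`
followed by a first-passage path from `j`, and the path operator of the latter is
`pathOp p * B i j`. Summing `g(length) · tr(C X C*)` over this decomposition gives a first-step
identity for every length weight `g`. With `g = 1` the sums are hitting probabilities, equal to
`tr X` (by homogeneity) when hitting is certain; for `g r = r` the shift `g (r + 1) = g r + 1`
turns the identity into the recursion for `k̂`. For minimality write `k̂_i = ∑ₘ S_m i`, where
`S_m i X` is the mass of the paths longer than `m`: then `S_0 i X = tr X` and
`S_{m+1} i X = ∑_{j ∉ A} S_m j (B_i^j X B_i^j*)`, so by induction every partial sum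
`∑_{m < n} S_m i X` is at most `y_i X`.
-/

namespace FPPath

variable {A : Set ℤ}

theorem ext {i : ℤ} {p q : FPPath A i} (hr : p.r = q.r) (hx : p.x = q.x) : p = q := by
  cases p; cases q; simp_all

def single {i : ℤ} (hi : i ∉ A) {j : ℤ} (hj : j ∈ A) : FPPath A i where
  r := 1
  x m := if m = 0 then i else j
  hr := le_rfl
  hx0 := rfl
  hmid m hm := by simpa [Nat.lt_one_iff.mp hm] using hi
  hlast := by simpa using hj
  htail m hm := by simp [Nat.one_le_iff_ne_zero.mp hm]

def cons {i : ℤ} (hi : i ∉ A) {j : ℤ} (p : FPPath A j) : FPPath A i where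
  r := p.r + 1
  x m := if m = 0 then i else p.x (m - 1)
  hr := Nat.le_add_left 1 p.r
  hx0 := rfl
  hmid m hm := by
    rcases m with _ | m
    · simpa using hi
    · simpa using p.hmid m (by omega)
  hlast := by simpa using p.hlast
  htail m hm := by
    rcases m with _ | m
    · omega
    · simpa using p.htail m (by omega)

theorem r_eq_one_of_mem {i : ℤ} (q : FPPath A i) (h : q.x 1 ∈ A) : q.r = 1 := by
  by_contra hne
  exact q.hmid 1 (by have := q.hr; omega) h

theorem one_lt_r_of_notMem {i : ℤ} (q : FPPath A i) (h : q.x 1 ∉ A) : 1 < q.r := by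
  by_contra hle
  exact h (le_antisymm (not_lt.mp hle) q.hr ▸ q.hlast)

def tail {i : ℤ} (q : FPPath A i) (h : q.x 1 ∉ A) : FPPath A (q.x 1) where
  r := q.r - 1
  x m := q.x (m + 1)
  hr := by have := q.one_lt_r_of_notMem h; omega
  hx0 := rfl
  hmid m hm := q.hmid (m + 1) (by omega)
  hlast := by
    rw [Nat.sub_add_cancel q.hr]
    exact q.hlast
  htail m hm := by
    rw [Nat.sub_add_cancel q.hr]
    exact q.htail (m + 1) (by omega)

theorem sigma_mk_eq {P : ℤ → Prop} {j j' : {l : ℤ // P l}} {p : FPPath A j} {p' : FPPath A j'}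
    (hr : p.r = p'.r) (hx : p.x = p'.x) :
    (⟨j, p⟩ : Σ l : {l : ℤ // P l}, FPPath A l) = ⟨j', p'⟩ := by
  obtain rfl : j = j' := Subtype.ext (by rw [← p.hx0, ← p'.hx0, hx])
  rw [ext hr hx]

open Classical in
noncomputable def firstStep {i : ℤ} (hi : i ∉ A) :
    FPPath A i ≃ {j : ℤ // j ∈ A} ⊕ Σ j : {j : ℤ // j ∉ A}, FPPath A j where
  toFun q := if h : q.x 1 ∈ A then .inl ⟨q.x 1, h⟩ else .inr ⟨⟨q.x 1, h⟩, q.tail h⟩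
  invFun
    | .inl j => single hi j.2
    | .inr ⟨_, p⟩ => cons hi p
  left_inv q := by
    by_cases h : q.x 1 ∈ A
    · simp only [dif_pos h]
      have hr := q.r_eq_one_of_mem h
      refine ext hr.symm (funext fun m => ?_)
      rcases m with _ | m
      · exact q.hx0.symm
      · exact (hr ▸ q.htail (m + 1) (by omega)).symm
    · simp only [dif_neg h]
      refine ext ?_ (funext fun m => ?_)
      · exact Nat.sub_add_cancel q.hr
      · rcases m with _ | m
        · exact q.hx0.symm
        · rfl
  right_inv
    | .inl j => by simp [single, j.2]
    | .inr ⟨j, p⟩ => by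
      have hx1 : (cons hi p).x 1 = j := p.hx0
      simp only [hx1, dif_neg j.2]
      exact congrArg Sum.inr (sigma_mk_eq (Nat.add_sub_cancel p.r 1) (funext fun m => by
        simp [cons, tail]))

theorem firstStep_symm_inl {i : ℤ} (hi : i ∉ A) (j : {j : ℤ // j ∈ A}) :
    (firstStep hi).symm (.inl j) = single hi j.2 := rfl

theorem firstStep_symm_inr {i : ℤ} (hi : i ∉ A) {j : {j : ℤ // j ∉ A}} (p : FPPath A j) :
    (firstStep hi).symm (.inr ⟨j, p⟩) = cons hi p := rfl

end FPPath

theorem List.foldl_mul_left_eq {α M : Type*} [Monoid M] (f : α → M) (l : List α) (a : M) :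
    l.foldl (fun b m => f m * b) a = l.foldl (fun b m => f m * b) 1 * a := by
  induction l generalizing a with
  | nil => simp
  | cons m l ih => rw [List.foldl_cons, List.foldl_cons, ih, ih (f m * 1), mul_one, mul_assoc]

section Paths

variable {k : ℕ} (B : ℤ → ℤ → Matrix (Fin k) (Fin k) ℂ) {A : Set ℤ} {i : ℤ} (hi : i ∉ A)

theorem pathOp_single {j : ℤ} (hj : j ∈ A) : pathOp B (FPPath.single hi hj) = B i j := by
  simp [pathOp, FPPath.single]

theorem pathOp_cons {j : ℤ} (p : FPPath A j) :
    pathOp B (FPPath.cons hi p) = pathOp B p * B i j := by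
  simp only [pathOp, FPPath.cons, List.range_succ_eq_map, List.foldl_cons, List.foldl_map]
  rw [List.foldl_mul_left_eq]
  simp [p.hx0]

end Paths

noncomputable def conjTrace {k : ℕ} (C X : Matrix (Fin k) (Fin k) ℂ) : ℝ≥0∞ :=
  ENNReal.ofReal (C * X * Cᴴ).trace.re

section ConjTrace

variable {k : ℕ} (C D X : Matrix (Fin k) (Fin k) ℂ)

theorem conjTrace_mul : conjTrace (C * D) X = conjTrace C (D * X * Dᴴ) := by
  simp only [conjTrace, Matrix.conjTranspose_mul, Matrix.mul_assoc]

theorem conjTrace_smul {c : ℝ} (hc : 0 ≤ c) :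
    conjTrace C ((c : ℂ) • X) = ENNReal.ofReal c * conjTrace C X := by
  rw [conjTrace, Matrix.mul_smul, Matrix.smul_mul, Matrix.trace_smul, smul_eq_mul,
    Complex.re_ofReal_mul, ENNReal.ofReal_mul hc, conjTrace]

end ConjTrace

noncomputable def weightedMass {k : ℕ} (B : ℤ → ℤ → Matrix (Fin k) (Fin k) ℂ) (A : Set ℤ)
    (g : ℕ → ℝ≥0∞) (i : ℤ) (X : Matrix (Fin k) (Fin k) ℂ) : ℝ≥0∞ :=
  ∑' p : FPPath A i, g p.r * conjTrace (pathOp B p) X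

section WeightedMass

variable {k : ℕ} (B : ℤ → ℤ → Matrix (Fin k) (Fin k) ℂ) (A : Set ℤ)

theorem meanHit_eq_weightedMass {i : ℤ} (hi : i ∉ A) (X : Matrix (Fin k) (Fin k) ℂ) :
    meanHit B A i X = weightedMass B A (fun r => r) i X := by
  rw [meanHit, if_neg hi, weightedMass]
  rfl

theorem weightedMass_congr {g g' : ℕ → ℝ≥0∞} (h : ∀ r, 0 < r → g r = g' r) (i : ℤ)
    (X : Matrix (Fin k) (Fin k) ℂ) : weightedMass B A g i X = weightedMass B A g' i X :=
  tsum_congr fun p => by rw [h p.r p.hr]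

theorem weightedMass_add (g g' : ℕ → ℝ≥0∞) (i : ℤ) (X : Matrix (Fin k) (Fin k) ℂ) :
    weightedMass B A (g + g') i X = weightedMass B A g i X + weightedMass B A g' i X := by
  simp only [weightedMass, Pi.add_apply, add_mul, ENNReal.tsum_add]

theorem weightedMass_tsum {ι : Type*} (g : ι → ℕ → ℝ≥0∞) (i : ℤ)
    (X : Matrix (Fin k) (Fin k) ℂ) :
    weightedMass B A (fun r => ∑' m, g m r) i X = ∑' m, weightedMass B A (g m) i X := by
  simp only [weightedMass, ← ENNReal.tsum_mul_right]
  exact ENNReal.tsum_comm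

theorem weightedMass_smul (g : ℕ → ℝ≥0∞) (i : ℤ) (X : Matrix (Fin k) (Fin k) ℂ) {c : ℝ}
    (hc : 0 ≤ c) :
    weightedMass B A g i ((c : ℂ) • X) = ENNReal.ofReal c * weightedMass B A g i X := by
  simp only [weightedMass, conjTrace_smul _ _ hc, ← ENNReal.tsum_mul_left]
  exact tsum_congr fun p => mul_left_comm _ _ _

theorem weightedMass_first_step (g : ℕ → ℝ≥0∞) {i : ℤ} (hi : i ∉ A)
    (X : Matrix (Fin k) (Fin k) ℂ) :
    weightedMass B A g i X =
      g 1 * ∑' j : {j : ℤ // j ∈ A}, conjTrace (B i j) X +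
        ∑' j : {j : ℤ // j ∉ A},
          weightedMass B A (fun r => g (r + 1)) j (B i j * X * (B i j)ᴴ) := by
  rw [weightedMass, ← (FPPath.firstStep hi).symm.tsum_eq,
    Summable.tsum_sum ENNReal.summable ENNReal.summable, ENNReal.tsum_sigma',
    ← ENNReal.tsum_mul_left]
  refine congrArg₂ (· + ·) ?_ ?_
  · refine tsum_congr fun j => ?_
    rw [FPPath.firstStep_symm_inl, pathOp_single]
    rfl
  · refine tsum_congr fun j => tsum_congr fun p => ?_
    rw [FPPath.firstStep_symm_inr, pathOp_cons, conjTrace_mul]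
    rfl

end WeightedMass

section Hitting

variable {k : ℕ} (B : ℤ → ℤ → Matrix (Fin k) (Fin k) ℂ) {A : Set ℤ}

theorem weightedMass_one_of_hitProb_eq_one {i : ℤ} (hi : i ∉ A)
    {ρ : Matrix (Fin k) (Fin k) ℂ} (hρ : ρ.PosSemidef) (h : hitProb B A i ρ = 1) :
    weightedMass B A 1 i ρ = 1 := by
  rw [hitProb, if_neg hi] at h
  have hnonneg (p : FPPath A i) : 0 ≤ (pathOp B p * ρ * (pathOp B p)ᴴ).trace.re :=
    (Complex.nonneg_iff.mp (hρ.mul_mul_conjTranspose_same _).trace_nonneg).1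
  have hsummable : Summable fun p : FPPath A i => (pathOp B p * ρ * (pathOp B p)ᴴ).trace.re := by
    by_contra hns
    rw [tsum_eq_zero_of_not_summable hns] at h
    exact zero_ne_one h
  simp only [weightedMass, Pi.one_apply, one_mul, conjTrace]
  rw [← ENNReal.ofReal_tsum_of_nonneg hnonneg hsummable, h, ENNReal.ofReal_one]

theorem weightedMass_one_eq_trace
    (hcertain : ∀ j ∉ A, ∀ ρ : Matrix (Fin k) (Fin k) ℂ, ρ.PosSemidef →
      Matrix.trace ρ = 1 → hitProb B A j ρ = 1)
    {i : ℤ} (hi : i ∉ A) {X : Matrix (Fin k) (Fin k) ℂ} (hX : X.PosSemidef) :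
    weightedMass B A 1 i X = ENNReal.ofReal X.trace.re := by
  obtain ⟨t, ht, htr⟩ := RCLike.nonneg_iff_exists_ofReal.mp hX.trace_nonneg
  replace htr : X.trace = (t : ℂ) := htr.symm
  rcases ht.eq_or_lt with rfl | hpos
  · obtain rfl : X = 0 := hX.trace_eq_zero_iff.mp (by simpa using htr)
    simp [weightedMass, conjTrace]
  set ρ : Matrix (Fin k) (Fin k) ℂ := ((t⁻¹ : ℝ) : ℂ) • X
  have hρ : ρ.PosSemidef := hX.smul (by exact_mod_cast (inv_nonneg.mpr ht))
  have hρtr : ρ.trace = 1 := by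
    rw [Matrix.trace_smul, htr, smul_eq_mul, ← Complex.ofReal_mul, inv_mul_cancel₀ hpos.ne',
      Complex.ofReal_one]
  have hX_eq : X = (t : ℂ) • ρ := by
    rw [smul_smul, ← Complex.ofReal_mul, mul_inv_cancel₀ hpos.ne', Complex.ofReal_one, one_smul]
  calc weightedMass B A 1 i X = ENNReal.ofReal t * weightedMass B A 1 i ρ := by
        rw [hX_eq, weightedMass_smul B A 1 i ρ ht]
    _ = ENNReal.ofReal X.trace.re := by
        rw [weightedMass_one_of_hitProb_eq_one B hi hρ (hcertain i hi ρ hρ hρtr), mul_one, htr,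
          Complex.ofReal_re]

end Hitting

section MeanHit

variable {k : ℕ} (B : ℤ → ℤ → Matrix (Fin k) (Fin k) ℂ) {A : Set ℤ}

theorem meanHit_first_step
    (hcertain : ∀ j ∉ A, ∀ ρ : Matrix (Fin k) (Fin k) ℂ, ρ.PosSemidef →
      Matrix.trace ρ = 1 → hitProb B A j ρ = 1)
    {i : ℤ} (hi : i ∉ A) {ρ : Matrix (Fin k) (Fin k) ℂ} (hρ : ρ.PosSemidef)
    (htr : ρ.trace = 1) :
    meanHit B A i ρ = 1 + ∑' j : {j : ℤ // j ∉ A}, meanHit B A j (B i j * ρ * (B i j)ᴴ) := by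
  have hhit := weightedMass_one_of_hitProb_eq_one B hi hρ (hcertain i hi ρ hρ htr)
  rw [weightedMass_first_step B A 1 hi ρ, Pi.one_apply, one_mul] at hhit
  have hshift : (fun r : ℕ => ((r + 1 : ℕ) : ℝ≥0∞)) = (fun r : ℕ => (r : ℝ≥0∞)) + 1 := by
    funext r
    push_cast
    rfl
  rw [meanHit_eq_weightedMass B A hi, weightedMass_first_step B A _ hi, hshift]
  simp only [weightedMass_add, ENNReal.tsum_add, Nat.cast_one, one_mul]
  rw [← hhit,
    tsum_congr fun j : {j : ℤ // j ∉ A} => meanHit_eq_weightedMass B A j.2 _]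
  exact (add_assoc _ _ _).symm.trans (add_right_comm _ _ _)

theorem meanHit_eq_tsum_weightedMass_lt {i : ℤ} (hi : i ∉ A) (X : Matrix (Fin k) (Fin k) ℂ) :
    meanHit B A i X = ∑' m : ℕ, weightedMass B A (fun r => if m < r then 1 else 0) i X := by
  rw [meanHit_eq_weightedMass B A hi, ← weightedMass_tsum]
  congr 1
  funext r
  rw [tsum_eq_sum (s := Finset.range r) fun m hm => if_neg (by simpa using hm),
    Finset.sum_congr rfl fun m hm => if_pos (Finset.mem_range.mp hm)]
  simp

theorem weightedMass_lt_first_step {i : ℤ} (hi : i ∉ A) (m : ℕ) (X : Matrix (Fin k) (Fin k) ℂ) :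
    weightedMass B A (fun r => if m + 1 < r then 1 else 0) i X =
      ∑' j : {j : ℤ // j ∉ A},
        weightedMass B A (fun r => if m < r then 1 else 0) j (B i j * X * (B i j)ᴴ) := by
  rw [weightedMass_first_step B A _ hi]
  simp

theorem sum_range_weightedMass_lt_le
    (hcertain : ∀ j ∉ A, ∀ ρ : Matrix (Fin k) (Fin k) ℂ, ρ.PosSemidef →
      Matrix.trace ρ = 1 → hitProb B A j ρ = 1)
    (y : ℤ → Matrix (Fin k) (Fin k) ℂ → ℝ≥0∞)
    (hy : ∀ i ∉ A, ∀ X : Matrix (Fin k) (Fin k) ℂ, X.PosSemidef →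
      ENNReal.ofReal X.trace.re + ∑' j : {j : ℤ // j ∉ A}, y j (B i j * X * (B i j)ᴴ) ≤ y i X)
    (n : ℕ) {i : ℤ} (hi : i ∉ A) {X : Matrix (Fin k) (Fin k) ℂ} (hX : X.PosSemidef) :
    ∑ m ∈ Finset.range n, weightedMass B A (fun r => if m < r then 1 else 0) i X ≤ y i X := by
  induction n generalizing i X with
  | zero => simp
  | succ n ih =>
    have hzero : weightedMass B A (fun r => if 0 < r then 1 else 0) i X =
        ENNReal.ofReal X.trace.re :=
      (weightedMass_congr B A (g' := 1) (fun r hr => if_pos hr) i X).trans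
        (weightedMass_one_eq_trace B hcertain hi hX)
    calc ∑ m ∈ Finset.range (n + 1), weightedMass B A (fun r => if m < r then 1 else 0) i X
        = ENNReal.ofReal X.trace.re + ∑' j : {j : ℤ // j ∉ A}, ∑ m ∈ Finset.range n,
            weightedMass B A (fun r => if m < r then 1 else 0) j (B i j * X * (B i j)ᴴ) := by
          rw [Finset.sum_range_succ', add_comm, hzero,
            Summable.tsum_finsetSum fun m _ => ENNReal.summable]
          simp only [weightedMass_lt_first_step B hi]
      _ ≤ ENNReal.ofReal X.trace.re + ∑' j : {j : ℤ // j ∉ A}, y j (B i j * X * (B i j)ᴴ) :=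
          add_le_add_right (ENNReal.tsum_le_tsum fun j =>
            ih j.2 (hX.mul_mul_conjTranspose_same _)) _
      _ ≤ y i X := hy i hi X hX

theorem meanHit_le_of_supersolution
    (hcertain : ∀ j ∉ A, ∀ ρ : Matrix (Fin k) (Fin k) ℂ, ρ.PosSemidef →
      Matrix.trace ρ = 1 → hitProb B A j ρ = 1)
    (y : ℤ → Matrix (Fin k) (Fin k) ℂ → ℝ≥0∞)
    (hy : ∀ i ∉ A, ∀ X : Matrix (Fin k) (Fin k) ℂ, X.PosSemidef →
      ENNReal.ofReal X.trace.re + ∑' j : {j : ℤ // j ∉ A}, y j (B i j * X * (B i j)ᴴ) ≤ y i X)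
    (i : ℤ) {X : Matrix (Fin k) (Fin k) ℂ} (hX : X.PosSemidef) :
    meanHit B A i X ≤ y i X := by
  by_cases hi : i ∈ A
  · simp [meanHit, hi]
  rw [meanHit_eq_tsum_weightedMass_lt B hi, ENNReal.tsum_eq_iSup_nat]
  exact iSup_le fun n => sum_range_weightedMass_lt_le B hcertain y hy n hi hX

end MeanHit

theorem meanHit_recursion_and_minimal_general (k : ℕ)
    (B : ℤ → ℤ → Matrix (Fin k) (Fin k) ℂ)
    (A : Set ℤ)
    (hcertain : ∀ j ∉ A, ∀ ρ : Matrix (Fin k) (Fin k) ℂ, ρ.PosSemidef →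
      Matrix.trace ρ = 1 → hitProb B A j ρ = 1) :
    (∀ i ∉ A, ∀ ρ : Matrix (Fin k) (Fin k) ℂ, ρ.PosSemidef → Matrix.trace ρ = 1 →
      meanHit B A i ρ =
        1 + ∑' j : {j : ℤ // j ∉ A}, meanHit B A j (B i j * ρ * (B i (j : ℤ))ᴴ)) ∧
    (∀ y : ℤ → (Matrix (Fin k) (Fin k) ℂ → ℝ≥0∞),
      (∀ i (X Y : Matrix (Fin k) (Fin k) ℂ), X.PosSemidef → Y.PosSemidef →
        y i (X + Y) = y i X + y i Y) →
      (∀ i (c : ℝ≥0) (X : Matrix (Fin k) (Fin k) ℂ), X.PosSemidef →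
        y i (((c : ℝ) : ℂ) • X) = (c : ℝ≥0∞) * y i X) →
      (∀ i ∈ A, ∀ X : Matrix (Fin k) (Fin k) ℂ, y i X = 0) →
      (∀ i ∉ A, ∀ X : Matrix (Fin k) (Fin k) ℂ, X.PosSemidef →
        y i X = ENNReal.ofReal (Matrix.trace X).re +
          ∑' j : {j : ℤ // j ∉ A}, y j (B i j * X * (B i (j : ℤ))ᴴ)) →
      ∀ i : ℤ, ∀ ρ : Matrix (Fin k) (Fin k) ℂ, ρ.PosSemidef → Matrix.trace ρ = 1 →
        meanHit B A i ρ ≤ y i ρ) :=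
  ⟨fun _ hi _ hρ htr => meanHit_first_step B hcertain hi hρ htr,
    fun y _ _ _ hy i _ hρ _ => meanHit_le_of_supersolution B hcertain y
      (fun i hi X hX => (hy i hi X hX).ge) i hρ⟩

/-- assuming hitting A is certain, the mean hitting times satisfy the
one-step recursion k̂_i(ρ) = 1 + ∑_{j∉A} k̂_j(B_i^j ρ (B_i^j)*) for i ∉ A, and (k̂_i) is
the minimal nonnegative solution: any additive, positively homogeneous [0,∞]-valued
family (y_i) vanishing on A and satisfying y_i(X) = tr(X) + ∑_{j∉A} y_j(B_i^j X (B_i^j)*)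
for i ∉ A dominates it on density matrices. -/
theorem meanHit_recursion_and_minimal (k : ℕ) (hk : 1 ≤ k)
    (B : ℤ → ℤ → Matrix (Fin k) (Fin k) ℂ)
    (hfin : ∀ i, {j : ℤ | B i j ≠ 0}.Finite)
    (hunit : ∀ i, ∑ᶠ j : ℤ, (B i j)ᴴ * B i j = 1)
    (A : Set ℤ)
    (hcertain : ∀ j ∉ A, ∀ ρ : Matrix (Fin k) (Fin k) ℂ, ρ.PosSemidef →
      Matrix.trace ρ = 1 → hitProb B A j ρ = 1) :
    (∀ i ∉ A, ∀ ρ : Matrix (Fin k) (Fin k) ℂ, ρ.PosSemidef → Matrix.trace ρ = 1 →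
      meanHit B A i ρ =
        1 + ∑' j : {j : ℤ // j ∉ A}, meanHit B A j (B i j * ρ * (B i (j : ℤ))ᴴ)) ∧
    (∀ y : ℤ → (Matrix (Fin k) (Fin k) ℂ → ℝ≥0∞),
      (∀ i (X Y : Matrix (Fin k) (Fin k) ℂ), X.PosSemidef → Y.PosSemidef →
        y i (X + Y) = y i X + y i Y) →
      (∀ i (c : ℝ≥0) (X : Matrix (Fin k) (Fin k) ℂ), X.PosSemidef →
        y i (((c : ℝ) : ℂ) • X) = (c : ℝ≥0∞) * y i X) →
      (∀ i ∈ A, ∀ X : Matrix (Fin k) (Fin k) ℂ, y i X = 0) →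
      (∀ i ∉ A, ∀ X : Matrix (Fin k) (Fin k) ℂ, X.PosSemidef →
        y i X = ENNReal.ofReal (Matrix.trace X).re +
          ∑' j : {j : ℤ // j ∉ A}, y j (B i j * X * (B i (j : ℤ))ᴴ)) →
      ∀ i : ℤ, ∀ ρ : Matrix (Fin k) (Fin k) ℂ, ρ.PosSemidef → Matrix.trace ρ = 1 →
        meanHit B A i ρ ≤ y i ρ) :=
  meanHit_recursion_and_minimal_general k B A hcertain
end

section
/- Let (B_i^j)_{i,j∈ℤ} define an OQRW on ℤ, let a ≥ 1, D = {i ∈ ℤ : −a < i < a}, ∂D = {−a, a}, and assume B_i^j = 0 whenever i ∈ D and j ∉ D ∪ ∂D. Let c : D → [0,∞) and f : ∂D → [0,∞). Assume hitting the boundary is certain: for every i ∈ D and every density matrix ρ, ∑_C tr(C ρ C*) = 1, the sum over all first-passage paths C from i to ∂D. Then the boundary value problem has at most one bounded solution: if (ψ_i)_{i∈D∪∂D} and (ψ'_i)_{i∈D∪∂D} are families of linear functionals on the k×k complex matrices, both satisfying ψ_j(X) = f(j)·tr(X) for j ∈ ∂D, ψ_i(X) = c(i)·tr(X) + ∑_{j∈D∪∂D}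 ψ_j( B_i^j X (B_i^j)* ) for i ∈ D and all positive semidefinite X, and both bounded in the sense that there is M with |ψ_i(ρ)| ≤ M and |ψ'_i(ρ)| ≤ M for all i and all density matrices ρ, then ψ_i(ρ) = ψ'_i(ρ) for all i ∈ D ∪ ∂D and all density matrices ρ. -/
/-!
The difference `g = ψ - ψ'` of two solutions vanishes on `∂D` and satisfies
`g_i(X) = ∑_{j ∈ D} g_j(B_i^j X (B_i^j)*)` on `D`. Iterating this `m` times writes `g_i(ρ)` as a
sum over the paths that stay in `D` for `m` steps, so `‖g_i(ρ)‖` is at most a constant times the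
trace mass that has not left `D` after `m` steps. Since the walk preserves trace, this mass is `1`
minus the probability of having hit `∂D` within `m` steps, which tends to `0` because hitting
`∂D` is certain.
-/

open Matrix ComplexOrder

/-- A first-passage path from `i ∈ D = (−a, a)` to the boundary `∂D = {−a, a}`:
a finite sequence i = x₀, x₁, …, x_r with r ≥ 1, x₀, …, x_{r−1} ∈ D and x_r ∈ ∂D. -/
structure BPath (a i : ℤ) where
  r : ℕ
  x : ℕ → ℤ
  hr : 1 ≤ r
  hx0 : x 0 = i
  hmid : ∀ m, m < r → -a < x m ∧ x m < a
  hlast : x r = -a ∨ x r = a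
  htail : ∀ m, r ≤ m → x m = x r

/-- The path operator C = B_{x_{r−1}}^{x_r} ⋯ B_{x₁}^{x₂} B_{x₀}^{x₁}. -/
noncomputable def bpathOp {k : ℕ} (B : ℤ → ℤ → Matrix (Fin k) (Fin k) ℂ)
    {a i : ℤ} (p : BPath a i) : Matrix (Fin k) (Fin k) ℂ :=
  (List.range p.r).foldl (fun M m => B (p.x m) (p.x (m + 1)) * M) 1

open scoped ENNReal
open Filter Topology

theorem ENNReal.tsum_iSup_of_monotone {α ι : Type*} [Preorder ι] [IsDirectedOrder ι]
    {f : α → ι → ℝ≥0∞} (hf : ∀ a, Monotone (f a)) :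
    ∑' a, ⨆ i, f a i = ⨆ i, ∑' a, f a i := by
  simp_rw [ENNReal.tsum_eq_iSup_sum, ENNReal.finsetSum_iSup_of_monotone hf]
  exact iSup_comm

theorem List.foldl_mul_left_eq_mul {α β : Type*} [Monoid α] (s : β → α) (l : List β) (A : α) :
    l.foldl (fun M m => s m * M) A = l.foldl (fun M m => s m * M) 1 * A := by
  induction l generalizing A with
  | nil => simp
  | cons m l ih => rw [List.foldl_cons, List.foldl_cons, ih, ih (s m * 1), mul_one, mul_assoc]

section KilledIteration

variable {ι n R : Type*} [Fintype n]

theorem Matrix.PosSemidef.re_trace_nonneg {X : Matrix n n ℂ} (hX : X.PosSemidef) :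
    0 ≤ X.trace.re :=
  (Complex.nonneg_iff.mp hX.trace_nonneg).1

theorem Matrix.PosSemidef.norm_apply_le_mul_trace (φ : Matrix n n ℂ →ₗ[ℂ] ℂ) {M : ℝ}
    (hM : ∀ ρ : Matrix n n ℂ, ρ.PosSemidef → ρ.trace = 1 → ‖φ ρ‖ ≤ M)
    {X : Matrix n n ℂ} (hX : X.PosSemidef) : ‖φ X‖ ≤ M * X.trace.re := by
  obtain ⟨t, htX⟩ : ∃ t : ℝ, X.trace = t :=
    ⟨_, Complex.eq_re_of_ofReal_le (r := 0) (by rw [Complex.ofReal_zero]; exact hX.trace_nonneg)⟩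
  have ht0 : 0 ≤ t := Complex.zero_le_real.mp (htX ▸ hX.trace_nonneg)
  rw [htX, Complex.ofReal_re]
  obtain rfl | ht := ht0.eq_or_lt
  · simp [hX.trace_eq_zero_iff.mp (by simp [htX])]
  · have hρ : (t⁻¹ • X).PosSemidef := hX.smul (inv_nonneg.mpr ht.le)
    have hρtr : (t⁻¹ • X).trace = 1 := by
      rw [trace_smul, htX, Complex.real_smul, ← Complex.ofReal_mul, inv_mul_cancel₀ ht.ne',
        Complex.ofReal_one]
    calc ‖φ X‖ = t * ‖φ (t⁻¹ • X)‖ := by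
          rw [LinearMap.map_smul_of_tower, norm_smul, Real.norm_of_nonneg (inv_nonneg.mpr ht.le),
            mul_inv_cancel_left₀ ht.ne']
      _ ≤ t * M := by gcongr; exact hM _ hρ hρtr
      _ = M * t := mul_comm _ _

theorem Matrix.sum_trace_mul_mul_conjTranspose {α : Type*} [CommSemiring α] [StarRing α]
    [DecidableEq n] {s : Finset ι} {b : ι → Matrix n n α} (hb : ∑ j ∈ s, (b j)ᴴ * b j = 1)
    (X : Matrix n n α) : ∑ j ∈ s, (b j * X * (b j)ᴴ).trace = X.trace := by
  simp_rw [trace_mul_cycle (b _), ← trace_sum, ← Finset.sum_mul, hb, one_mul]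

variable (B : ι → ι → Matrix n n ℂ) (S : Finset ι)

/-- The walk killed on leaving `S`: `killedIter B S h m i X = ∑ h x_m (C X Cᴴ)` over the paths
`i = x₀, …, x_m` with `x₁, …, x_m ∈ S`, where `C = B_{x_{m-1}}^{x_m} ⋯ B_{x₀}^{x₁}`. -/
def killedIter [AddCommMonoid R] (h : ι → Matrix n n ℂ → R) : ℕ → ι → Matrix n n ℂ → R
  | 0 => h
  | m + 1 => fun i X => ∑ j ∈ S, killedIter h m j (B i j * X * (B i j)ᴴ)

def killedMass : ℕ → ι → Matrix n n ℂ → ℝ :=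
  killedIter B S fun _ X => X.trace.re

variable {B S}

theorem killedMass_succ (m : ℕ) (i : ι) (X : Matrix n n ℂ) :
    killedMass B S (m + 1) i X = ∑ j ∈ S, killedMass B S m j (B i j * X * (B i j)ᴴ) :=
  rfl

theorem killedMass_nonneg (m : ℕ) (i : ι) {X : Matrix n n ℂ} (hX : X.PosSemidef) :
    0 ≤ killedMass B S m i X := by
  induction m generalizing i X with
  | zero => exact hX.re_trace_nonneg
  | succ m ih => exact Finset.sum_nonneg fun j _ => ih j (hX.mul_mul_conjTranspose_same _)

theorem killedIter_eq_self [AddCommMonoid R] {h : ι → Matrix n n ℂ → R}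
    (hh : ∀ i ∈ S, ∀ X : Matrix n n ℂ, X.PosSemidef →
      h i X = ∑ j ∈ S, h j (B i j * X * (B i j)ᴴ))
    (m : ℕ) {i : ι} (hi : i ∈ S) {X : Matrix n n ℂ} (hX : X.PosSemidef) :
    killedIter B S h m i X = h i X := by
  induction m generalizing i X with
  | zero => rfl
  | succ m ih =>
    rw [hh i hi X hX]
    exact Finset.sum_congr rfl fun j hj => ih hj (hX.mul_mul_conjTranspose_same _)

theorem norm_killedIter_le [SeminormedAddCommGroup R] {h : ι → Matrix n n ℂ → R} {K : ℝ}
    (hK : ∀ j ∈ S, ∀ X : Matrix n n ℂ, X.PosSemidef → ‖h j X‖ ≤ K * X.trace.re)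
    (m : ℕ) {i : ι} (hi : i ∈ S) {X : Matrix n n ℂ} (hX : X.PosSemidef) :
    ‖killedIter B S h m i X‖ ≤ K * killedMass B S m i X := by
  induction m generalizing i X with
  | zero => exact hK i hi X hX
  | succ m ih =>
    calc ‖∑ j ∈ S, killedIter B S h m j (B i j * X * (B i j)ᴴ)‖
        ≤ ∑ j ∈ S, K * killedMass B S m j (B i j * X * (B i j)ᴴ) :=
          norm_sum_le_of_le _ fun j hj => ih hj (hX.mul_mul_conjTranspose_same _)
      _ = K * killedMass B S (m + 1) i X := (Finset.mul_sum _ _ _).symm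

theorem eq_zero_of_tendsto_killedMass [NormedAddCommGroup R] {h : ι → Matrix n n ℂ → R}
    {K : ℝ} (hh : ∀ i ∈ S, ∀ X : Matrix n n ℂ, X.PosSemidef →
      h i X = ∑ j ∈ S, h j (B i j * X * (B i j)ᴴ))
    (hK : ∀ j ∈ S, ∀ X : Matrix n n ℂ, X.PosSemidef → ‖h j X‖ ≤ K * X.trace.re)
    {i : ι} (hi : i ∈ S) {X : Matrix n n ℂ} (hX : X.PosSemidef)
    (hlim : Tendsto (fun m => killedMass B S m i X) atTop (𝓝 0)) : h i X = 0 := by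
  have hle (m : ℕ) : ‖h i X‖ ≤ K * killedMass B S m i X :=
    killedIter_eq_self hh m hi hX ▸ norm_killedIter_le hK m hi hX
  exact norm_le_zero_iff.mp (ge_of_tendsto' (by simpa using hlim.const_mul K) hle)

end KilledIteration

namespace BPath

variable {a i : ℤ}

theorem ext {p q : BPath a i} (hr : p.r = q.r) (hx : p.x = q.x) : p = q := by
  cases p; cases q; cases hr; cases hx; rfl

def single (hi : i ∈ Finset.Ioo (-a) a) (j : ({-a, a} : Finset ℤ)) : BPath a i where
  r := 1
  x := fun | 0 => i | _ + 1 => j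
  hr := le_rfl
  hx0 := rfl
  hmid m hm := by
    obtain rfl : m = 0 := by omega
    exact Finset.mem_Ioo.mp hi
  hlast := by simpa only [Finset.mem_insert, Finset.mem_singleton] using j.2
  htail m hm := by
    obtain ⟨m, rfl⟩ : ∃ m', m = m' + 1 := ⟨m - 1, by omega⟩
    rfl

@[simp]
theorem single_r (hi : i ∈ Finset.Ioo (-a) a) (j : ({-a, a} : Finset ℤ)) : (single hi j).r = 1 :=
  rfl

def cons (hi : i ∈ Finset.Ioo (-a) a) {j : ℤ} (q : BPath a j) : BPath a i where
  r := q.r + 1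
  x := fun | 0 => i | m + 1 => q.x m
  hr := by omega
  hx0 := rfl
  hmid m hm := by
    cases m with
    | zero => exact Finset.mem_Ioo.mp hi
    | succ m => exact q.hmid m (by omega)
  hlast := q.hlast
  htail m hm := by
    obtain ⟨m, rfl⟩ : ∃ m', m = m' + 1 := ⟨m - 1, by omega⟩
    exact q.htail m (by omega)

@[simp]
theorem cons_r (hi : i ∈ Finset.Ioo (-a) a) {j : ℤ} (q : BPath a j) : (cons hi q).r = q.r + 1 :=
  rfl

def tail (p : BPath a i) (hp : p.r ≠ 1) : BPath a (p.x 1) where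
  r := p.r - 1
  x m := p.x (m + 1)
  hr := by have := p.hr; omega
  hx0 := rfl
  hmid m hm := p.hmid (m + 1) (by omega)
  hlast := by
    rw [Nat.sub_add_cancel p.hr]
    exact p.hlast
  htail m hm := by
    rw [Nat.sub_add_cancel p.hr]
    exact p.htail (m + 1) (by omega)

theorem sigma_ext {j j' : Finset.Ioo (-a) a} {q : BPath a j} {q' : BPath a j'}
    (hj : (j : ℤ) = j') (hr : q.r = q'.r) (hx : q.x = q'.x) :
    (⟨j, q⟩ : Σ j : Finset.Ioo (-a) a, BPath a j) = ⟨j', q'⟩ := by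
  obtain rfl := Subtype.ext hj
  rw [ext hr hx]

def firstStepEquiv (hi : i ∈ Finset.Ioo (-a) a) :
    BPath a i ≃ ({-a, a} : Finset ℤ) ⊕ Σ j : Finset.Ioo (-a) a, BPath a j where
  toFun p :=
    if hp : p.r = 1 then .inl ⟨p.x 1, by simpa [hp] using p.hlast⟩
    else .inr ⟨⟨p.x 1, Finset.mem_Ioo.mpr (p.hmid 1 (by have := p.hr; omega))⟩, p.tail hp⟩
  invFun
    | .inl j => single hi j
    | .inr ⟨_, q⟩ => cons hi q
  left_inv p := by
    by_cases hp : p.r = 1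
    · dsimp only
      rw [dif_pos hp]
      refine ext hp.symm (funext fun m => ?_)
      cases m with
      | zero => exact p.hx0.symm
      | succ m => exact (hp ▸ p.htail (m + 1) (by omega)).symm
    · dsimp only
      rw [dif_neg hp]
      refine ext (Nat.sub_add_cancel p.hr) (funext fun m => ?_)
      cases m with
      | zero => exact p.hx0.symm
      | succ m => rfl
  right_inv
    | .inl j => by simp [single]
    | .inr ⟨j, q⟩ => by
      have hr : (cons hi q).r ≠ 1 := by
        have := q.hr
        rw [cons_r]
        omega
      simp only [dif_neg hr]
      exact congrArg Sum.inr (sigma_ext q.hx0 rfl rfl)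

end BPath

section ExitMass

variable {k : ℕ} (B : ℤ → ℤ → Matrix (Fin k) (Fin k) ℂ) {a : ℤ}

theorem bpathOp_single {i : ℤ} (hi : i ∈ Finset.Ioo (-a) a) (j : ({-a, a} : Finset ℤ)) :
    bpathOp B (BPath.single hi j) = B i j := by
  simp [bpathOp, BPath.single]

theorem bpathOp_cons {i j : ℤ} (hi : i ∈ Finset.Ioo (-a) a) (q : BPath a j) :
    bpathOp B (BPath.cons hi q) = bpathOp B q * B i j := by
  rw [bpathOp, BPath.cons_r, List.range_succ_eq_map,
    List.foldl_cons, List.foldl_map, List.foldl_mul_left_eq_mul, mul_one]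
  simp [BPath.cons, bpathOp, q.hx0]

def traceMass (X : Matrix (Fin k) (Fin k) ℂ) : ℝ≥0∞ :=
  ENNReal.ofReal X.trace.re

variable (a) in
noncomputable def exitMass (m : ℕ) (i : ℤ) (X : Matrix (Fin k) (Fin k) ℂ) : ℝ≥0∞ :=
  ∑' p : BPath a i, if p.r ≤ m then traceMass (bpathOp B p * X * (bpathOp B p)ᴴ) else 0

theorem exitMass_zero (i : ℤ) (X : Matrix (Fin k) (Fin k) ℂ) : exitMass B a 0 i X = 0 :=
  ENNReal.tsum_eq_zero.mpr fun p => if_neg (by have := p.hr; omega)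

theorem exitMass_succ (m : ℕ) {i : ℤ} (hi : i ∈ Finset.Ioo (-a) a) (X : Matrix (Fin k) (Fin k) ℂ) :
    exitMass B a (m + 1) i X = ∑ j ∈ {-a, a}, traceMass (B i j * X * (B i j)ᴴ)
      + ∑ j ∈ Finset.Ioo (-a) a, exitMass B a m j (B i j * X * (B i j)ᴴ) := by
  rw [exitMass, ← (BPath.firstStepEquiv hi).symm.tsum_eq,
    Summable.tsum_sum ENNReal.summable ENNReal.summable, ENNReal.tsum_sigma',
    ← Finset.tsum_subtype, ← Finset.tsum_subtype]
  congr 1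
  · refine tsum_congr fun j => ?_
    dsimp only [BPath.firstStepEquiv, Equiv.coe_fn_symm_mk]
    simp [bpathOp_single]
  · refine tsum_congr fun j => tsum_congr fun q => ?_
    dsimp only [BPath.firstStepEquiv, Equiv.coe_fn_symm_mk]
    simp only [BPath.cons_r, add_le_add_iff_right, bpathOp_cons, conjTranspose_mul, mul_assoc]

theorem exitMass_add_killedMass
    (hB : ∀ i ∈ Finset.Ioo (-a) a, ∑ j ∈ Finset.Icc (-a) a, (B i j)ᴴ * B i j = 1)
    (m : ℕ) {i : ℤ} (hi : i ∈ Finset.Ioo (-a) a) {X : Matrix (Fin k) (Fin k) ℂ}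
    (hX : X.PosSemidef) :
    exitMass B a m i X + ENNReal.ofReal (killedMass B (Finset.Ioo (-a) a) m i X) =
      traceMass X := by
  induction m generalizing i X with
  | zero => rw [exitMass_zero, zero_add]; rfl
  | succ m ih =>
    have hY (j : ℤ) : (B i j * X * (B i j)ᴴ).PosSemidef := hX.mul_mul_conjTranspose_same _
    have hIcc : Finset.Icc (-a) a = {-a, a} ∪ Finset.Ioo (-a) a := by
      ext j
      simp only [Finset.mem_Ioo, Finset.mem_Icc, Finset.mem_union, Finset.mem_insert,
        Finset.mem_singleton] at hi ⊢
      omega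
    have hdisj : Disjoint ({-a, a} : Finset ℤ) (Finset.Ioo (-a) a) := by
      simp [Finset.disjoint_left]
    calc exitMass B a (m + 1) i X
          + ENNReal.ofReal (killedMass B (Finset.Ioo (-a) a) (m + 1) i X)
        = ∑ j ∈ {-a, a}, traceMass (B i j * X * (B i j)ᴴ)
          + ∑ j ∈ Finset.Ioo (-a) a, (exitMass B a m j (B i j * X * (B i j)ᴴ)
            + ENNReal.ofReal (killedMass B (Finset.Ioo (-a) a) m j (B i j * X * (B i j)ᴴ))) := by
          rw [exitMass_succ B m hi, killedMass_succ, Finset.sum_add_distrib, add_assoc,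
            ENNReal.ofReal_sum_of_nonneg fun j _ => killedMass_nonneg m j (hY j)]
      _ = ∑ j ∈ Finset.Icc (-a) a, traceMass (B i j * X * (B i j)ᴴ) := by
          rw [hIcc, Finset.sum_union hdisj]
          exact congrArg _ (Finset.sum_congr rfl fun j hj => ih hj (hY j))
      _ = traceMass X := by
          rw [traceMass, ← sum_trace_mul_mul_conjTranspose (hB i hi) X, Complex.re_sum,
            ENNReal.ofReal_sum_of_nonneg fun j _ => (hY j).re_trace_nonneg]
          rfl

theorem tendsto_exitMass (i : ℤ) (X : Matrix (Fin k) (Fin k) ℂ) :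
    Tendsto (fun m => exitMass B a m i X) atTop
      (𝓝 (∑' p : BPath a i, traceMass (bpathOp B p * X * (bpathOp B p)ᴴ))) := by
  set w : BPath a i → ℝ≥0∞ := fun p => traceMass (bpathOp B p * X * (bpathOp B p)ᴴ)
  have hmono (p : BPath a i) : Monotone fun m => if p.r ≤ m then w p else 0 := by
    intro m m' hm
    by_cases hp : p.r ≤ m
    · simp [hp, hp.trans hm]
    · simp [hp]
  have hsup (p : BPath a i) : ⨆ m, (if p.r ≤ m then w p else 0) = w p :=
    le_antisymm (iSup_le fun m => by split_ifs <;> simp) (le_iSup_of_le p.r (by simp))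
  rw [← tsum_congr hsup, ENNReal.tsum_iSup_of_monotone hmono]
  exact tendsto_atTop_iSup fun m m' hm => ENNReal.tsum_le_tsum fun p => hmono p hm

theorem tendsto_killedMass_zero
    (hB : ∀ i ∈ Finset.Ioo (-a) a, ∑ j ∈ Finset.Icc (-a) a, (B i j)ᴴ * B i j = 1)
    {i : ℤ} (hi : i ∈ Finset.Ioo (-a) a) {ρ : Matrix (Fin k) (Fin k) ℂ} (hρ : ρ.PosSemidef)
    (htr : ρ.trace = 1)
    (hcert : ∑' p : BPath a i, (bpathOp B p * ρ * (bpathOp B p)ᴴ).trace.re = 1) :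
    Tendsto (fun m => killedMass B (Finset.Ioo (-a) a) m i ρ) atTop (𝓝 0) := by
  have hsum : Summable fun p : BPath a i => (bpathOp B p * ρ * (bpathOp B p)ᴴ).trace.re := by
    by_contra hs
    rw [tsum_eq_zero_of_not_summable hs] at hcert
    exact zero_ne_one hcert
  have hexit : Tendsto (fun m => exitMass B a m i ρ) atTop (𝓝 1) := by
    have h := tendsto_exitMass B (a := a) i ρ
    unfold traceMass at h
    rwa [← ENNReal.ofReal_tsum_of_nonneg
      (fun p => (hρ.mul_mul_conjTranspose_same _).re_trace_nonneg) hsum, hcert,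
      ENNReal.ofReal_one] at h
  have hsplit (m : ℕ) :
      killedMass B (Finset.Ioo (-a) a) m i ρ = 1 - (exitMass B a m i ρ).toReal := by
    have h := exitMass_add_killedMass B hB m hi hρ
    rw [traceMass, htr, Complex.one_re, ENNReal.ofReal_one] at h
    have hfin : exitMass B a m i ρ ≠ ∞ := ne_top_of_le_ne_top ENNReal.one_ne_top (h ▸ le_self_add)
    have h' := congrArg ENNReal.toReal h
    rw [ENNReal.toReal_add hfin ENNReal.ofReal_ne_top,
      ENNReal.toReal_ofReal (killedMass_nonneg m i hρ), ENNReal.toReal_one] at h'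
    linarith
  have hlim := tendsto_const_nhds (x := (1 : ℝ)).sub
    ((ENNReal.tendsto_toReal ENNReal.one_ne_top).comp hexit)
  simpa [funext hsplit] using hlim

end ExitMass

section BoundaryValueProblem

variable {n : Type*} [Fintype n] {B : ℤ → ℤ → Matrix n n ℂ} {a : ℤ}

theorem sum_Icc_conjTranspose_mul_self [DecidableEq n]
    (hunit : ∀ i, ∑ᶠ j : ℤ, (B i j)ᴴ * B i j = 1)
    (hzero : ∀ i j : ℤ, -a < i → i < a → (j < -a ∨ a < j) → B i j = 0)
    {i : ℤ} (hi : i ∈ Finset.Ioo (-a) a) :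
    ∑ j ∈ Finset.Icc (-a) a, (B i j)ᴴ * B i j = 1 := by
  rw [Finset.mem_Ioo] at hi
  refine (finsum_eq_finsetSum_of_support_subset _ fun j hj => ?_).symm.trans (hunit i)
  by_contra hj'
  simp only [Finset.coe_Icc, Set.mem_Icc, not_and_or, not_le] at hj'
  exact hj (by simp [hzero i j hi.1 hi.2 hj'])

theorem sub_apply_eq_sum_Ioo {ψ ψ' : ℤ → (Matrix n n ℂ →ₗ[ℂ] ℂ)} {i : ℤ} {c : ℂ}
    {X : Matrix n n ℂ} (hX : X.PosSemidef)
    (hbdry : ∀ j : ℤ, (j = -a ∨ j = a) → ∀ Y : Matrix n n ℂ, Y.PosSemidef → ψ j Y = ψ' j Y)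
    (hψ : ψ i X = c + ∑ j ∈ Finset.Icc (-a) a, ψ j (B i j * X * (B i j)ᴴ))
    (hψ' : ψ' i X = c + ∑ j ∈ Finset.Icc (-a) a, ψ' j (B i j * X * (B i j)ᴴ)) :
    (ψ i - ψ' i) X = ∑ j ∈ Finset.Ioo (-a) a, (ψ j - ψ' j) (B i j * X * (B i j)ᴴ) := by
  rw [LinearMap.sub_apply, hψ, hψ', add_sub_add_left_eq_sub, ← Finset.sum_sub_distrib]
  refine (Finset.sum_subset Finset.Ioo_subset_Icc_self fun j hj hj' => ?_).symm
  simp only [Finset.mem_Icc, Finset.mem_Ioo] at hj hj'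
  rw [hbdry j (by omega) _ (hX.mul_mul_conjTranspose_same (B i j)), sub_self]

end BoundaryValueProblem

theorem boundary_value_problem_unique_general (k : ℕ)
    (B : ℤ → ℤ → Matrix (Fin k) (Fin k) ℂ)
    (hunit : ∀ i, ∑ᶠ j : ℤ, (B i j)ᴴ * B i j = 1)
    (a : ℤ)
    (hzero : ∀ i j : ℤ, -a < i → i < a → (j < -a ∨ a < j) → B i j = 0)
    (c f : ℤ → ℝ)
    (hcertain : ∀ i : ℤ, -a < i → i < a →
      ∀ ρ : Matrix (Fin k) (Fin k) ℂ, ρ.PosSemidef → Matrix.trace ρ = 1 →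
        (∑' p : BPath a i, (Matrix.trace (bpathOp B p * ρ * (bpathOp B p)ᴴ)).re) = 1)
    (ψ ψ' : ℤ → (Matrix (Fin k) (Fin k) ℂ →ₗ[ℂ] ℂ))
    (hbdry : ∀ j : ℤ, (j = -a ∨ j = a) → ∀ X : Matrix (Fin k) (Fin k) ℂ,
      X.PosSemidef →
        ψ j X = ((f j : ℝ) : ℂ) * Matrix.trace X ∧
        ψ' j X = ((f j : ℝ) : ℂ) * Matrix.trace X)
    (hint : ∀ i : ℤ, -a < i → i < a → ∀ X : Matrix (Fin k) (Fin k) ℂ,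
      X.PosSemidef →
        ψ i X = ((c i : ℝ) : ℂ) * Matrix.trace X
            + ∑ j ∈ Finset.Icc (-a) a, ψ j (B i j * X * (B i j)ᴴ) ∧
        ψ' i X = ((c i : ℝ) : ℂ) * Matrix.trace X
            + ∑ j ∈ Finset.Icc (-a) a, ψ' j (B i j * X * (B i j)ᴴ))
    (hbound : ∃ M : ℝ, ∀ i ∈ Finset.Icc (-a) a,
      ∀ ρ : Matrix (Fin k) (Fin k) ℂ, ρ.PosSemidef → Matrix.trace ρ = 1 →
        ‖ψ i ρ‖ ≤ M ∧ ‖ψ' i ρ‖ ≤ M) :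
    ∀ i ∈ Finset.Icc (-a) a,
      ∀ ρ : Matrix (Fin k) (Fin k) ℂ, ρ.PosSemidef → Matrix.trace ρ = 1 →
        ψ i ρ = ψ' i ρ := by
  intro i hi ρ hρ htr
  by_cases hi_bdry : i = -a ∨ i = a
  · rw [(hbdry i hi_bdry ρ hρ).1, (hbdry i hi_bdry ρ hρ).2]
  have hiD : i ∈ Finset.Ioo (-a) a := by
    simp only [Finset.mem_Icc, Finset.mem_Ioo] at hi ⊢
    omega
  have hharm (j : ℤ) (hj : j ∈ Finset.Ioo (-a) a) (X : Matrix (Fin k) (Fin k) ℂ)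
      (hX : X.PosSemidef) : (ψ j - ψ' j) X =
        ∑ l ∈ Finset.Ioo (-a) a, (ψ l - ψ' l) (B j l * X * (B j l)ᴴ) := by
    obtain ⟨hψ, hψ'⟩ := hint j (Finset.mem_Ioo.mp hj).1 (Finset.mem_Ioo.mp hj).2 X hX
    exact sub_apply_eq_sum_Ioo hX
      (fun l hl Y hY => (hbdry l hl Y hY).1.trans (hbdry l hl Y hY).2.symm) hψ hψ'
  obtain ⟨M, hM⟩ := hbound
  have hK (j : ℤ) (hj : j ∈ Finset.Ioo (-a) a) (X : Matrix (Fin k) (Fin k) ℂ)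
      (hX : X.PosSemidef) : ‖(ψ j - ψ' j) X‖ ≤ (M + M) * X.trace.re :=
    hX.norm_apply_le_mul_trace _ fun ρ hρ htr => (norm_sub_le _ _).trans <| add_le_add
      (hM j (Finset.Ioo_subset_Icc_self hj) ρ hρ htr).1
      (hM j (Finset.Ioo_subset_Icc_self hj) ρ hρ htr).2
  have hlim := tendsto_killedMass_zero B (fun j hj => sum_Icc_conjTranspose_mul_self hunit hzero hj)
    hiD hρ htr (hcertain i (Finset.mem_Ioo.mp hiD).1 (Finset.mem_Ioo.mp hiD).2 ρ hρ htr)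
  exact sub_eq_zero.mp (eq_zero_of_tendsto_killedMass (h := fun j => ⇑(ψ j - ψ' j))
    hharm hK hiD hρ hlim)

/-- uniqueness of bounded solutions of the boundary value problem.
Assume hitting the boundary is certain (for every i ∈ D and density ρ, the total
first-passage probability ∑_C tr(C ρ C*) is 1). If ψ and ψ' are families of linear
functionals satisfying ψ_j(X) = f(j)·tr(X) on ∂D and
ψ_i(X) = c(i)·tr(X) + ∑_{j∈D∪∂D} ψ_j(B_i^j X (B_i^j)*) on D (for positive
semidefinite X), and both are bounded on density matrices, then ψ = ψ' on densities. -/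
theorem boundary_value_problem_unique (k : ℕ) (hk : 1 ≤ k)
    (B : ℤ → ℤ → Matrix (Fin k) (Fin k) ℂ)
    (hfin : ∀ i, {j : ℤ | B i j ≠ 0}.Finite)
    (hunit : ∀ i, ∑ᶠ j : ℤ, (B i j)ᴴ * B i j = 1)
    (a : ℤ) (ha : 1 ≤ a)
    (hzero : ∀ i j : ℤ, -a < i → i < a → (j < -a ∨ a < j) → B i j = 0)
    (c f : ℤ → ℝ)
    (hc : ∀ i : ℤ, -a < i → i < a → 0 ≤ c i)
    (hf : 0 ≤ f (-a) ∧ 0 ≤ f a)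
    (hcertain : ∀ i : ℤ, -a < i → i < a →
      ∀ ρ : Matrix (Fin k) (Fin k) ℂ, ρ.PosSemidef → Matrix.trace ρ = 1 →
        (∑' p : BPath a i, (Matrix.trace (bpathOp B p * ρ * (bpathOp B p)ᴴ)).re) = 1)
    (ψ ψ' : ℤ → (Matrix (Fin k) (Fin k) ℂ →ₗ[ℂ] ℂ))
    (hbdry : ∀ j : ℤ, (j = -a ∨ j = a) → ∀ X : Matrix (Fin k) (Fin k) ℂ,
      X.PosSemidef →
        ψ j X = ((f j : ℝ) : ℂ) * Matrix.trace X ∧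
        ψ' j X = ((f j : ℝ) : ℂ) * Matrix.trace X)
    (hint : ∀ i : ℤ, -a < i → i < a → ∀ X : Matrix (Fin k) (Fin k) ℂ,
      X.PosSemidef →
        ψ i X = ((c i : ℝ) : ℂ) * Matrix.trace X
            + ∑ j ∈ Finset.Icc (-a) a, ψ j (B i j * X * (B i j)ᴴ) ∧
        ψ' i X = ((c i : ℝ) : ℂ) * Matrix.trace X
            + ∑ j ∈ Finset.Icc (-a) a, ψ' j (B i j * X * (B i j)ᴴ))
    (hbound : ∃ M : ℝ, ∀ i ∈ Finset.Icc (-a) a,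
      ∀ ρ : Matrix (Fin k) (Fin k) ℂ, ρ.PosSemidef → Matrix.trace ρ = 1 →
        ‖ψ i ρ‖ ≤ M ∧ ‖ψ' i ρ‖ ≤ M) :
    ∀ i ∈ Finset.Icc (-a) a,
      ∀ ρ : Matrix (Fin k) (Fin k) ℂ, ρ.PosSemidef → Matrix.trace ρ = 1 →
        ψ i ρ = ψ' i ρ :=
  boundary_value_problem_unique_general k B hunit a hzero c f hcertain ψ ψ' hbdry hint hbound
end
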